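/- Let h(I₁,I₂) = I₁·I₂ and let f : 𝕋 → ℝ be a C¹ function. Consider the Hamiltonian H(θ₁,θ₂,I₁,I₂) = I₁I₂ + ε·f(θ₁) on 𝕋² × ℝ². If the initial condition satisfies I₂(0) = 0, then the solution of the Hamiltonian equations satisfies I₂(t) = 0, θ₁(t) = θ₁(0) for all t, and I₁(t) = I₁(0) - t·ε·f'(θ₁(0)). In particular, if f'(θ₁(0)) ≠ 0, then |I₁(t) - I₁(0)| = ε|t|·|f'(θ₁(0))| grows linearly in time. -/

import Mathlib

/-! The equations are solved in cascade: `I₂` has derivative `0`, so it stays `0`; then so does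
`θ̇₁ = I₂`, freezing `θ₁`; then `İ₁ = -ε f'(θ₁(0))` is constant, so `I₁` is affine in `t`. -/

theorem eq_add_smul_of_hasDerivAt_const {𝕜 E : Type*} [RCLike 𝕜] [NormedAddCommGroup E]
    [NormedSpace 𝕜 E] {g : 𝕜 → E} {c : E} (hg : ∀ t, HasDerivAt g c t) (t : 𝕜) :
    g t = g 0 + t • c := by
  have hdrift : ∀ s, HasDerivAt (fun s => g s - s • c) 0 s := fun s => by
    have := (hg s).sub ((hasDerivAt_id s).smul_const c)
    rwa [one_smul, sub_self] at this
  have hconst := is_const_of_deriv_eq_zero (fun s => (hdrift s).differentiableAt)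
    (fun s => (hdrift s).deriv) t 0
  rwa [zero_smul, sub_zero, sub_eq_iff_eq_add] at hconst

theorem stmt_1_general (ε : ℝ) (hε : 0 < ε) (f : ℝ → ℝ)
    (θ₁ I₁ I₂ : ℝ → ℝ)
    (h1 : ∀ t, HasDerivAt I₁ (-(ε * deriv f (θ₁ t))) t)
    (h2 : ∀ t, HasDerivAt I₂ 0 t)
    (h3 : ∀ t, HasDerivAt θ₁ (I₂ t) t)
    (h0 : I₂ 0 = 0) :
    (∀ t, I₂ t = 0) ∧ (∀ t, θ₁ t = θ₁ 0) ∧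
    (∀ t, I₁ t = I₁ 0 - t * (ε * deriv f (θ₁ 0))) ∧
    (deriv f (θ₁ 0) ≠ 0 →
      ∀ t, |I₁ t - I₁ 0| = ε * |t| * |deriv f (θ₁ 0)|) := by
  have hI₂ : ∀ t, I₂ t = 0 := fun t => by
    simpa [h0] using eq_add_smul_of_hasDerivAt_const h2 t
  have hθ₁ : ∀ t, θ₁ t = θ₁ 0 := fun t => by
    have h3' : ∀ s, HasDerivAt θ₁ 0 s := fun s => hI₂ s ▸ h3 s
    simpa using eq_add_smul_of_hasDerivAt_const h3' t
  have hI₁ : ∀ t, I₁ t = I₁ 0 - t * (ε * deriv f (θ₁ 0)) := fun t => by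
    have h1' : ∀ s, HasDerivAt I₁ (-(ε * deriv f (θ₁ 0))) s := fun s => hθ₁ s ▸ h1 s
    rw [eq_add_smul_of_hasDerivAt_const h1' t, smul_eq_mul]
    ring
  refine ⟨hI₂, hθ₁, hI₁, fun _ t => ?_⟩
  rw [hI₁ t, sub_sub_cancel_left, abs_neg, abs_mul, abs_mul, abs_of_pos hε]
  ring

theorem stmt_1 (ε : ℝ) (hε : 0 < ε) (f : ℝ → ℝ)
    (hf : ContDiff ℝ 1 f) (hper : ∀ x, f (x + 1) = f x)
    (θ₁ θ₂ I₁ I₂ : ℝ → ℝ)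
    (h1 : ∀ t, HasDerivAt I₁ (-(ε * deriv f (θ₁ t))) t)
    (h2 : ∀ t, HasDerivAt I₂ 0 t)
    (h3 : ∀ t, HasDerivAt θ₁ (I₂ t) t)
    (h4 : ∀ t, HasDerivAt θ₂ (I₁ t) t)
    (h0 : I₂ 0 = 0) :
    (∀ t, I₂ t = 0) ∧ (∀ t, θ₁ t = θ₁ 0) ∧
    (∀ t, I₁ t = I₁ 0 - t * (ε * deriv f (θ₁ 0))) ∧
    (deriv f (θ₁ 0) ≠ 0 →
      ∀ t, |I₁ t - I₁ 0| = ε * |t| * |deriv f (θ₁ 0)|) :=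
  stmt_1_general ε hε f θ₁ I₁ I₂ h1 h2 h3 h0
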